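/- The fourth-order differential operator W₄ = d⁴/dt⁴ + ((1620t³-29232t²+15552t)/(72t²(t-1)(5t-72)))d³/dt³ + ((565t²-12204t+2592)/(36t²(t-1)(5t-72)))d²/dt² + ((25t-720)/(72t²(t-1)(5t-72)))d/dt factors as W₄ = W₁ ∘ W₃, where W₃ = d³/dt³ + (3/(2(t-1)))d²/dt² + ((5t-36)/(36t²(t-1)))d/dt + (72-5t)/(72t³(t-1)) and W₁ = d/dt + (15t²-298t+216)/(t(t-1)(5t-72)). -/

import Mathlib

noncomputable def W1op (u : ℝ → ℝ) : ℝ → ℝ := fun t =>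
  deriv u t + ((15*t^2 - 298*t + 216)/(t*(t-1)*(5*t-72))) * u t

noncomputable def W3op (u : ℝ → ℝ) : ℝ → ℝ := fun t =>
  deriv^[3] u t + (3/(2*(t-1))) * deriv^[2] u t
    + ((5*t - 36)/(36*t^2*(t-1))) * deriv u t
    + ((72 - 5*t)/(72*t^3*(t-1))) * u t

noncomputable def W4op (u : ℝ → ℝ) : ℝ → ℝ := fun t =>
  deriv^[4] u t
    + ((1620*t^3 - 29232*t^2 + 15552*t)/(72*t^2*(t-1)*(5*t-72))) * deriv^[3] u t
    + ((565*t^2 - 12204*t + 2592)/(36*t^2*(t-1)*(5*t-72))) * deriv^[2] u t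
    + ((25*t - 720)/(72*t^2*(t-1)*(5*t-72))) * deriv u t

/-- the factorization W₄ = W₁ ∘ W₃ of differential operators. -/
theorem W4_factorization (u : ℝ → ℝ) (hu : ContDiff ℝ (⊤ : ℕ∞) u) (t : ℝ)
    (h0 : t ≠ 0) (h1 : t ≠ 1) (h2 : t ≠ 72/5) :
    W1op (W3op u) t = W4op u t := by
  have h1' : t - 1 ≠ 0 := sub_ne_zero.mpr h1
  have h2' : 5*t - 72 ≠ 0 := by
    intro h; apply h2; linarith [sub_eq_zero.mp h]
  have hD : ∀ n, Differentiable ℝ (deriv^[n] u) := fun n =>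
    (hu.of_le (by simp) |>.iterate_deriv n).differentiable (by simp)
  have hU : ∀ n, HasDerivAt (deriv^[n] u) (deriv^[n+1] u t) t := by
    intro n
    have := (hD n t).hasDerivAt
    rwa [← Function.iterate_succ_apply' deriv n u] at this
  have hU0 : HasDerivAt u (deriv u t) t := by simpa using hU 0
  have hU1 : HasDerivAt (deriv u) (deriv^[2] u t) t := by
    have := hU 1; simpa using this
  have hU2 : HasDerivAt (deriv^[2] u) (deriv^[3] u t) t := hU 2
  have hU3 : HasDerivAt (deriv^[3] u) (deriv^[4] u t) t := hU 3
  -- coefficient derivatives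
  have hb0 : (36*t^2*(t-1)) ≠ 0 := by
    intro h; simp only [mul_eq_zero] at h; rcases h with (h|h)
    · rcases h with (h|h); · norm_num at h
      · exact h0 (pow_eq_zero_iff (by norm_num) |>.mp h)
    · exact h1' h
  have hc0 : (72*t^3*(t-1)) ≠ 0 := by
    intro h; simp only [mul_eq_zero] at h; rcases h with (h|h)
    · rcases h with (h|h); · norm_num at h
      · exact h0 (pow_eq_zero_iff (by norm_num) |>.mp h)
    · exact h1' h
  have hden_a : HasDerivAt (fun s : ℝ => 2*(s-1)) 2 t := by
    simpa using ((hasDerivAt_id t).sub_const 1).const_mul 2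
  have ha : HasDerivAt (fun s : ℝ => 3/(2*(s-1)))
      ((0*(2*(t-1)) - 3*2)/(2*(t-1))^2) t :=
    (hasDerivAt_const t 3).div hden_a (by simpa using h1')
  have hden_b : HasDerivAt (fun s : ℝ => 36*s^2*(s-1))
      (36*(2*t^1)*(t-1) + 36*t^2*1) t := by
    exact (((hasDerivAt_pow 2 t).const_mul 36).mul ((hasDerivAt_id t).sub_const 1))
  have hnum_b : HasDerivAt (fun s : ℝ => 5*s - 36) 5 t := by
    simpa using ((hasDerivAt_id t).const_mul 5).sub_const 36
  have hb : HasDerivAt (fun s : ℝ => (5*s - 36)/(36*s^2*(s-1)))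
      ((5*(36*t^2*(t-1)) - (5*t-36)*(36*(2*t^1)*(t-1) + 36*t^2*1))/(36*t^2*(t-1))^2) t :=
    hnum_b.div hden_b hb0
  have hden_c : HasDerivAt (fun s : ℝ => 72*s^3*(s-1))
      (72*(3*t^2)*(t-1) + 72*t^3*1) t := by
    exact (((hasDerivAt_pow 3 t).const_mul 72).mul ((hasDerivAt_id t).sub_const 1))
  have hnum_c : HasDerivAt (fun s : ℝ => 72 - 5*s) (-5) t := by
    simpa using ((hasDerivAt_id t).const_mul 5).const_sub (72:ℝ)
  have hc : HasDerivAt (fun s : ℝ => (72 - 5*s)/(72*s^3*(s-1)))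
      ((-5*(72*t^3*(t-1)) - (72-5*t)*(72*(3*t^2)*(t-1) + 72*t^3*1))/(72*t^3*(t-1))^2) t :=
    hnum_c.div hden_c hc0
  have hW3 : HasDerivAt (W3op u)
      (deriv^[4] u t
        + (((0*(2*(t-1)) - 3*2)/(2*(t-1))^2) * deriv^[2] u t
            + (3/(2*(t-1))) * deriv^[3] u t)
        + (((5*(36*t^2*(t-1)) - (5*t-36)*(36*(2*t^1)*(t-1) + 36*t^2*1))/(36*t^2*(t-1))^2)
              * deriv u t
            + ((5*t - 36)/(36*t^2*(t-1))) * deriv^[2] u t)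
        + (((-5*(72*t^3*(t-1)) - (72-5*t)*(72*(3*t^2)*(t-1) + 72*t^3*1))/(72*t^3*(t-1))^2)
              * u t
            + ((72 - 5*t)/(72*t^3*(t-1))) * deriv u t)) t := by
    exact ((hU3.add (ha.mul hU2)).add (hb.mul hU1)).add (hc.mul hU0)
  have hd : deriv (W3op u) t = _ := hW3.deriv
  simp only [W1op, W3op, W4op, hd]
  have h2'' : t*5 - 72 ≠ 0 := by intro h; apply h2'; linarith
  field_simp
  ring
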